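/- Let C = ⟨(b|0), (0 | fh+2f)⟩ be a separable Z_2Z_4-additive cyclic code with fgh = x^β-1, β odd. Then C⊥ = ⟨((x^α-1)/b* | 0), (0 | g*h* + 2g*)⟩. -/

import Mathlib

open Polynomial

/-- Reduction modulo 2, `Z₄[x] → Z₂[x]`. -/
noncomputable def red42 : Polynomial (ZMod 4) →+* Polynomial (ZMod 2) :=
  Polynomial.mapRingHom (ZMod.castHom (show 2 ∣ 4 by norm_num) (ZMod 2))

/-- The polynomial `∑ uᵢ xⁱ` associated to a binary vector. -/
noncomputable def polyOf2 {α : ℕ} (u : Fin α → ZMod 2) : Polynomial (ZMod 2) :=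
  ∑ i, C (u i) * X ^ (i : ℕ)

/-- The polynomial `∑ u'ⱼ xʲ` associated to a quaternary vector. -/
noncomputable def polyOf4 {β : ℕ} (u : Fin β → ZMod 4) : Polynomial (ZMod 4) :=
  ∑ j, C (u j) * X ^ (j : ℕ)

/-- Membership in the `Z₂Z₄`-additive cyclic code `C = ⟨(b|0), (ℓ|q)⟩`. -/
def memC {α β : ℕ} (b ℓ : Polynomial (ZMod 2)) (q : Polynomial (ZMod 4))
    (z : (Fin α → ZMod 2) × (Fin β → ZMod 4)) : Prop :=
  ∃ lam mu : Polynomial (ZMod 4),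
    (X ^ α - 1 : Polynomial (ZMod 2)) ∣
        polyOf2 z.1 - (red42 lam * b + red42 mu * ℓ) ∧
    (X ^ β - 1 : Polynomial (ZMod 4)) ∣ polyOf4 z.2 - mu * q

/-- The standard inner product on `Z₂^α × Z₄^β` with values in `Z₄`. -/
def innerZ2Z4 {α β : ℕ} (u v : (Fin α → ZMod 2) × (Fin β → ZMod 4)) : ZMod 4 :=
  2 * ∑ i, (((u.1 i).val : ZMod 4) * ((v.1 i).val : ZMod 4)) + ∑ j, u.2 j * v.2 j


/-!
The code is the product `C_X × C_Y`, so its dual is `C_X⊥ × C_Y⊥` and the two components can be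
treated separately. In `R[x]/(xⁿ - 1)` the inner product of `u` and `v` is the constant
coefficient of `u(x) v(x⁻¹)`; hence `v ⊥ ⟨w⟩` iff `w(x) v(x⁻¹) = 0`, and applying the involution
`x ↦ x⁻¹` (with `x^(deg w) w(x⁻¹) = w*`) iff `w* v = 0`. Over `Z₂` this says `(xᵅ - 1)/b* ∣ v`.
Over `Z₄` put `A = f*`, `B = g*`, `H = h*`: they are pairwise coprime because they are so
modulo `2`, where `x^β - 1` is separable for odd `β`, and `ABH = 0`. Then `A(H + 2xᵏ) v = 0`
iff `B(H + 2) ∣ v`: coprimality gives `B ∣ v`, multiplying by `B` gives `2ABv = 0`, so `ABv`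
is divisible by `2` (the `2`-torsion of `Z₄[x]/(x^β - 1)` is divisible by `2`), and then `H + 2`,
which generates the ideal `(H, 2)`, divides `v`.
-/

open AdjoinRoot

section CoprimeFactors

variable {S : Type*} [CommRing S]

theorem isCoprime_of_isNilpotent_sub_one {a b x y : S} (h : IsNilpotent (a * x + b * y - 1)) :
    IsCoprime x y := by
  obtain ⟨u, hu⟩ := (h.isUnit_add_one : IsUnit (a * x + b * y - 1 + 1))
  refine ⟨↑u⁻¹ * a, ↑u⁻¹ * b, ?_⟩
  rw [sub_add_cancel] at hu
  linear_combination (↑u⁻¹ : S) * hu.symm + u.inv_mul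

theorem IsCoprime.add_two_mul (h4 : (4 : S) = 0) {x y : S} (h : IsCoprime x y) (z : S) :
    IsCoprime x (y + 2 * z) := by
  obtain ⟨a, b, hab⟩ := h
  refine isCoprime_of_isNilpotent_sub_one (a := a) (b := b) ⟨2, ?_⟩
  linear_combination (a * x + b * y - 1 + 4 * b * z) * hab + (b * z) ^ 2 * h4

theorem mul_add_two_mul_mul_eq_zero_iff (h4 : (4 : S) = 0)
    (htwo : ∀ r : S, 2 * r = 0 → 2 ∣ r) {A B H U : S} (hAB : IsCoprime A B)
    (hAH : IsCoprime A H) (hBH : IsCoprime B H) (hABH : A * B * H = 0) (hU : IsUnit U) (P : S) :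
    A * (H + 2 * U) * P = 0 ↔ B * (H + 2) ∣ P := by
  constructor
  · intro hP
    have hB : B ∣ P := (hAB.symm.mul_right (hBH.add_two_mul h4 U)).dvd_of_dvd_mul_left
      ⟨0, by rw [mul_zero, hP]⟩
    -- `H + 2` generates the ideal `(H, 2)`: it divides `H² = (H + 2) (H - 2)`, and `H ∈ (H²)`.
    obtain ⟨c, d, hcd⟩ := hAH.symm.mul_right hBH.symm
    have hH : H + 2 ∣ H := ⟨c * (H - 2), by linear_combination (-H) * hcd + d * hABH + c * h4⟩
    have h2 : H + 2 ∣ 2 := by simpa using dvd_sub (dvd_refl (H + 2)) hH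
    obtain ⟨w, hw⟩ := htwo (U * (A * B * P)) (by linear_combination B * hP - P * hABH)
    obtain ⟨V, hUV⟩ := hU.exists_left_inv
    have hP' : P = c * H * P + d * V * (2 * w) := by
      linear_combination (-P) * hcd + d * V * hw - d * A * B * P * hUV
    have hK : H + 2 ∣ P := by
      rw [hP']
      exact dvd_add (dvd_mul_of_dvd_left (dvd_mul_of_dvd_right hH c) P)
        (dvd_mul_of_dvd_right (dvd_mul_of_dvd_left h2 w) _)
    have hBK : IsCoprime B (H + 2) := by simpa using hBH.add_two_mul h4 1
    exact hBK.mul_dvd hB hK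
  · rintro ⟨M, rfl⟩
    linear_combination (M * (H + 2 + 2 * U)) * hABH + (M * A * B * U) * h4

theorem dvd_iff_exists_dvd_sub_mul {m d : S} (hd : d ∣ m) (p : S) :
    d ∣ p ↔ ∃ μ, m ∣ p - μ * d := by
  constructor
  · rintro ⟨c, rfl⟩
    exact ⟨c, by rw [mul_comm, sub_self]; exact dvd_zero m⟩
  · rintro ⟨μ, hμ⟩
    simpa using dvd_add (hd.trans hμ) (dvd_mul_left d μ)

theorem ofNat_four_eq_zero [Algebra (ZMod 4) S] : (4 : S) = 0 := by
  have h := map_ofNat (algebraMap (ZMod 4) S) 4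
  rwa [show (OfNat.ofNat 4 : ZMod 4) = 0 from rfl, map_zero, eq_comm] at h

end CoprimeFactors

namespace Polynomial

variable {R : Type*} [CommRing R]

theorem monic_X_pow_sub_one {n : ℕ} (hn : 0 < n) : (X ^ n - 1 : R[X]).Monic := by
  simpa using monic_X_pow_sub_C (1 : R) hn.ne'

theorem reverse_X_pow_sub_one [Nontrivial R] (n : ℕ) :
    (X ^ n - 1 : R[X]).reverse = -(X ^ n - 1) := by
  rw [sub_eq_add_neg, ← C_1, ← C_neg, reverse_add_C, natDegree_X_pow, ← one_mul (X ^ n),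
    reverse_mul_X_pow, ← C_1, reverse_C, C_1, C_neg, C_1]
  ring

end Polynomial

theorem AdjoinRoot.mk_dvd_mk_iff {R : Type*} [CommRing R] {g d p : R[X]} :
    mk g d ∣ mk g p ↔ ∃ μ, g ∣ p - μ * d := by
  constructor
  · rintro ⟨y, hy⟩
    obtain ⟨μ, rfl⟩ := mk_surjective y
    exact ⟨μ, mk_eq_mk.mp (by rw [hy, map_mul, mul_comm])⟩
  · rintro ⟨μ, hμ⟩
    exact ⟨mk g μ, by rw [mk_eq_mk.mpr hμ, map_mul, mul_comm]⟩

theorem Nat.dvd_add_sub_one_mul_iff {n i j : ℕ} (hi : i < n) (hj : j < n) :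
    n ∣ i + (n - 1) * j ↔ i = j := by
  rw [← ZMod.natCast_eq_zero_iff]
  push_cast [Nat.cast_sub (show 1 ≤ n by omega), ZMod.natCast_self]
  rw [show (i : ZMod n) + (0 - 1) * j = i - j by ring, sub_eq_zero,
    ZMod.natCast_eq_natCast_iff', Nat.mod_eq_of_lt hi, Nat.mod_eq_of_lt hj]

section CyclicRing

variable {R : Type*} [CommRing R] {n : ℕ}

noncomputable def vecToPoly (u : Fin n → R) : R[X] := ∑ i, C (u i) * X ^ (i : ℕ)

variable (R n) in
abbrev CyclicRing := AdjoinRoot (X ^ n - 1 : R[X])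

local notation "ρ" => root (X ^ n - 1 : R[X])

theorem root_X_pow_sub_one_pow : ρ ^ n = 1 := by
  have h := mk_self (f := (X ^ n - 1 : R[X]))
  rwa [map_sub, map_pow, mk_X, map_one, sub_eq_zero] at h

variable (R n) in
/-- The involution `x ↦ x⁻¹ = x^(n-1)` of `R[x]/(xⁿ - 1)`. -/
noncomputable def cyclicInvolution : CyclicRing R n →ₐ[R] CyclicRing R n :=
  liftAlgHom _ (Algebra.ofId R _) (ρ ^ (n - 1)) (by
    rw [eval₂_sub, eval₂_X_pow, eval₂_one, ← pow_mul, mul_comm, pow_mul,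
      root_X_pow_sub_one_pow, one_pow, sub_self])

local notation "τ" => cyclicInvolution R n

theorem cyclicInvolution_root : τ ρ = ρ ^ (n - 1) := liftAlgHom_root ..

variable [NeZero n]

theorem root_mul_cyclicInvolution_root : ρ * τ ρ = 1 := by
  rw [cyclicInvolution_root, ← pow_succ', Nat.sub_add_cancel NeZero.one_le,
    root_X_pow_sub_one_pow]

theorem cyclicInvolution_involutive : Function.Involutive τ := by
  intro x
  suffices (τ).comp τ = AlgHom.id R (CyclicRing R n) from AlgHom.congr_fun this x
  refine AdjoinRoot.algHom_ext ?_
  have hρ := root_mul_cyclicInvolution_root (R := R) (n := n)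
  have hτn : τ ρ ^ n = 1 := by rw [← map_pow, root_X_pow_sub_one_pow, map_one]
  calc τ (τ ρ) = τ ρ ^ (n - 1) * (ρ * τ ρ) := by
        rw [hρ, mul_one]; conv_lhs => rw [cyclicInvolution_root, map_pow]
    _ = ρ * τ ρ ^ (n - 1 + 1) := by ring
    _ = ρ := by rw [Nat.sub_add_cancel NeZero.one_le, hτn, mul_one]

theorem cyclicInvolution_mk_mul_root_pow (w : R[X]) :
    τ (mk _ w) * ρ ^ w.natDegree = mk _ w.reverse := by
  let : Invertible ρ := invertibleOfRightInverse _ _ root_mul_cyclicInvolution_root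
  have h := eval₂_reflect_mul_pow (of _) ρ w.natDegree w.reverse (reverse_natDegree_le w)
  rw [reverse, reflect_reflect, ← reverse] at h
  have hinv : ⅟ρ = ρ ^ (n - 1) := cyclicInvolution_root
  rw [hinv] at h
  rw [cyclicInvolution, liftAlgHom_mk]
  convert h using 2
  · rfl
  · rw [← aeval_eq, aeval_def]; rfl

theorem modByMonicHom_mk_of_natDegree_lt {p : R[X]} (hp : p.natDegree < n) :
    modByMonicHom (monic_X_pow_sub_one (NeZero.pos n)) (mk _ p) = p := by
  nontriviality R
  rw [modByMonicHom_mk, modByMonic_eq_self_iff (monic_X_pow_sub_one (NeZero.pos n)), ← C_1,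
    degree_X_pow_sub_C (NeZero.pos n)]
  exact degree_le_natDegree.trans_lt (by exact_mod_cast hp)

variable (R n) in
noncomputable def cyclicConstCoeff : CyclicRing R n →ₗ[R] R :=
  (lcoeff R 0).comp (modByMonicHom (monic_X_pow_sub_one (NeZero.pos n)))

local notation "ε" => cyclicConstCoeff R n

theorem cyclicConstCoeff_root_pow (e : ℕ) : ε (ρ ^ e) = if n ∣ e then 1 else 0 := by
  nontriviality R
  rw [pow_eq_pow_mod e root_X_pow_sub_one_pow, ← mk_X, ← map_pow, cyclicConstCoeff,
    LinearMap.comp_apply, modByMonicHom_mk_of_natDegree_lt, lcoeff_apply, coeff_X_pow]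
  · simp only [Nat.dvd_iff_mod_eq_zero, eq_comm]
  · rw [natDegree_X_pow]
    exact Nat.mod_lt e (NeZero.pos n)

theorem sum_mul_eq_cyclicConstCoeff (u v : Fin n → R) :
    ∑ i, u i * v i = ε (mk _ (vecToPoly u) * τ (mk _ (vecToPoly v))) := by
  have hterm (i j : Fin n) : ε (ρ ^ (i : ℕ) * τ ρ ^ (j : ℕ)) = if i = j then 1 else 0 := by
    rw [cyclicInvolution_root, ← pow_mul, ← pow_add, cyclicConstCoeff_root_pow]
    simp only [Nat.dvd_add_sub_one_mul_iff i.isLt j.isLt, Fin.val_inj]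
  have hprod (i j : Fin n) : mk _ (C (u i) * X ^ (i : ℕ)) * τ (mk _ (C (v j) * X ^ (j : ℕ))) =
      (u i * v j) • (ρ ^ (i : ℕ) * τ ρ ^ (j : ℕ)) := by
    simp only [Algebra.smul_def, map_mul, map_pow, mk_C, mk_X, ← AdjoinRoot.algebraMap_eq,
      AlgHom.commutes]
    ring
  simp only [vecToPoly, map_sum, Finset.sum_mul, Finset.mul_sum, hprod, map_smul, hterm,
    smul_eq_mul, mul_ite, mul_one, mul_zero, Finset.sum_ite_eq', Finset.mem_univ, if_true]

theorem exists_mk_vecToPoly_eq (x : CyclicRing R n) :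
    ∃ v : Fin n → R, mk _ (vecToPoly v) = x := by
  obtain ⟨p, rfl⟩ := mk_surjective x
  have hm := monic_X_pow_sub_one (R := R) (NeZero.pos n)
  refine ⟨fun i => (p %ₘ (X ^ n - 1)).coeff i, ?_⟩
  have h : vecToPoly (fun i : Fin n => (p %ₘ (X ^ n - 1)).coeff i) = p %ₘ (X ^ n - 1) := by
    simp only [vecToPoly, C_mul_X_pow_eq_monomial]
    exact sum_modByMonic_coeff hm (by compute_degree!)
  rw [h, ← modByMonicHom_mk hm, mk_leftInverse hm]

theorem eq_zero_of_forall_cyclicConstCoeff_mul_eq_zero {x : CyclicRing R n}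
    (h : ∀ y, ε (y * x) = 0) : x = 0 := by
  obtain ⟨v, hv⟩ := exists_mk_vecToPoly_eq (τ x)
  have hx : x = τ (mk _ (vecToPoly v)) := by rw [hv, cyclicInvolution_involutive]
  have hv0 : v = 0 := by
    funext i
    have hi := h (mk _ (vecToPoly (Pi.single i 1)))
    rw [hx, ← sum_mul_eq_cyclicConstCoeff] at hi
    simpa [Pi.single_apply] using hi
  simp [hx, hv0, vecToPoly]

theorem forall_sum_mul_eq_zero_iff_dvd (w : R[X]) (v : Fin n → R) :
    (∀ u : Fin n → R, (∃ μ : R[X], (X ^ n - 1 : R[X]) ∣ vecToPoly u - μ * w) →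
      ∑ i, u i * v i = 0) ↔ (X ^ n - 1 : R[X]) ∣ w.reverse * vecToPoly v := by
  have hunit : IsUnit (ρ ^ w.natDegree) :=
    (IsUnit.of_mul_eq_one _ root_mul_cyclicInvolution_root).pow _
  calc _ ↔ mk _ w * τ (mk _ (vecToPoly v)) = 0 := ?_
    _ ↔ τ (mk _ w) * mk _ (vecToPoly v) = 0 := by
        rw [← map_eq_zero_iff _ (cyclicInvolution_involutive (R := R) (n := n)).injective,
          map_mul, cyclicInvolution_involutive]
    _ ↔ mk _ w.reverse * mk _ (vecToPoly v) = 0 := by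
        rw [← cyclicInvolution_mk_mul_root_pow (n := n), mul_right_comm, hunit.mul_left_eq_zero]
    _ ↔ _ := by rw [← map_mul, mk_eq_zero]
  constructor
  · intro h
    refine eq_zero_of_forall_cyclicConstCoeff_mul_eq_zero fun y => ?_
    obtain ⟨μ, rfl⟩ := mk_surjective y
    obtain ⟨u, hu⟩ := exists_mk_vecToPoly_eq (mk (X ^ n - 1) (μ * w))
    rw [← mul_assoc, ← map_mul, ← hu, ← sum_mul_eq_cyclicConstCoeff]
    exact h u ⟨μ, mk_eq_mk.mp hu⟩
  · rintro h u ⟨μ, hu⟩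
    rw [sum_mul_eq_cyclicConstCoeff, mk_eq_mk.mpr hu, map_mul (mk _), mul_assoc, h, mul_zero,
      map_zero]

end CyclicRing

theorem X_pow_sub_one_dvd_reverse_mul_iff {K : Type*} [Field K] {n : ℕ} (hn : 0 < n)
    {b : K[X]} (hb : b ∣ X ^ n - 1) (p : K[X]) :
    (X ^ n - 1 : K[X]) ∣ b.reverse * p ↔
      ∃ μ, (X ^ n - 1 : K[X]) ∣ p - μ * ((X ^ n - 1) / b.reverse) := by
  obtain ⟨t, ht⟩ := hb
  have hrev : b.reverse * t.reverse = -(X ^ n - 1) := by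
    rw [← reverse_mul_of_domain, ← ht, reverse_X_pow_sub_one]
  have hb0 : b.reverse ≠ 0 := fun h0 =>
    (monic_X_pow_sub_one hn).ne_zero (by rw [← neg_eq_zero, ← hrev, h0, zero_mul])
  have hbm : b.reverse ∣ X ^ n - 1 := dvd_neg.mp ⟨t.reverse, hrev.symm⟩
  rw [← dvd_iff_exists_dvd_sub_mul (EuclideanDomain.div_dvd_of_dvd hbm)]
  conv_lhs => rw [← EuclideanDomain.mul_div_cancel' hb0 hbm]
  exact mul_dvd_mul_iff_left hb0

theorem red42_surjective : Function.Surjective red42 :=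
  map_surjective _ (ZMod.ringHom_surjective _)

theorem red42_eq_zero_iff_two_dvd (s : (ZMod 4)[X]) : red42 s = 0 ↔ 2 ∣ s := by
  have hker : RingHom.ker (ZMod.castHom (show 2 ∣ 4 by norm_num) (ZMod 2)) = Ideal.span {2} := by
    ext x
    rw [RingHom.mem_ker, Ideal.mem_span_singleton']
    revert x
    decide
  rw [← RingHom.mem_ker, red42, ker_mapRingHom, hker, Ideal.map_span, Set.image_singleton,
    Ideal.mem_span_singleton, C_ofNat]

theorem two_mul_eq_zero_iff_red42_eq_zero (s : (ZMod 4)[X]) : 2 * s = 0 ↔ red42 s = 0 := by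
  simp only [Polynomial.ext_iff, coeff_ofNat_mul, red42, coe_mapRingHom, coeff_map, coeff_zero]
  refine forall_congr' fun k => ?_
  generalize s.coeff k = c
  revert c
  decide

theorem isCoprime_of_isCoprime_red42 {p q : (ZMod 4)[X]} (h : IsCoprime (red42 p) (red42 q)) :
    IsCoprime p q := by
  obtain ⟨a', b', hab⟩ := h
  obtain ⟨a, rfl⟩ := red42_surjective a'
  obtain ⟨b, rfl⟩ := red42_surjective b'
  obtain ⟨w, hw⟩ := (red42_eq_zero_iff_two_dvd (a * p + b * q - 1)).mp (by simp [hab])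
  refine isCoprime_of_isNilpotent_sub_one (a := a) (b := b) ⟨2, ?_⟩
  rw [hw, mul_pow, show (2 : (ZMod 4)[X]) ^ 2 = 4 by norm_num, ofNat_four_eq_zero, zero_mul]

theorem two_dvd_of_two_mul_eq_zero {g : (ZMod 4)[X]} (hg : g.Monic) {r : AdjoinRoot g}
    (hr : 2 * r = 0) : 2 ∣ r := by
  obtain ⟨s, rfl⟩ := mk_surjective r
  obtain ⟨c, hc⟩ : g ∣ 2 * s := mk_eq_zero.mp (by rwa [map_mul, map_ofNat])
  have hc0 : red42 c = 0 := by
    have h := congrArg red42 hc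
    rw [map_mul, map_mul, (red42_eq_zero_iff_two_dvd 2).mpr dvd_rfl, zero_mul, eq_comm] at h
    exact (mul_eq_zero.mp h).resolve_left (hg.map _).ne_zero
  obtain ⟨c', rfl⟩ := (red42_eq_zero_iff_two_dvd c).mp hc0
  obtain ⟨w, hw⟩ := (red42_eq_zero_iff_two_dvd (s - g * c')).mp
    ((two_mul_eq_zero_iff_red42_eq_zero _).mp (by linear_combination hc))
  refine ⟨mk g w, ?_⟩
  rw [← map_ofNat (mk g) 2, ← map_mul, mk_eq_mk]
  exact ⟨c', by linear_combination hw⟩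

theorem reverse_mul_add_two_mul {f h : (ZMod 4)[X]} (hf : f.Monic) (hh : h.Monic) :
    (f * h + 2 * f).reverse = f.reverse * (h.reverse + 2 * X ^ h.natDegree) := by
  have hh2 : h + C 2 ≠ 0 := fun h0 => by
    have hlc := hh.leadingCoeff
    rw [eq_neg_of_add_eq_zero_left h0, ← C_neg, leadingCoeff_C] at hlc
    exact absurd hlc (by decide)
  rw [show f * h + 2 * f = f * (h + C 2) by rw [C_ofNat]; ring,
    reverse_mul (by rwa [hf.leadingCoeff, one_mul, leadingCoeff_ne_zero]), reverse_add_C, C_ofNat]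

theorem reverse_mul_reverse_mul_reverse {R : Type*} [CommRing R] [Nontrivial R] {n : ℕ}
    {f g h : R[X]} (hf : f.Monic) (hg : g.Monic) (hh : h.Monic) (hfac : f * g * h = X ^ n - 1) :
    f.reverse * g.reverse * h.reverse = -(X ^ n - 1) := by
  rw [← reverse_mul (by simp [hf.leadingCoeff, hg.leadingCoeff]),
    ← reverse_mul (by simp [(hf.mul hg).leadingCoeff, hh.leadingCoeff]), hfac,
    reverse_X_pow_sub_one]

theorem pairwise_isCoprime_of_mul_mul_dvd {β : ℕ} (hβ : Odd β) {F G H : (ZMod 4)[X]}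
    (hdvd : F * G * H ∣ X ^ β - 1) : IsCoprime F G ∧ IsCoprime F H ∧ IsCoprime G H := by
  have hsep : (red42 F * (red42 G * red42 H)).Separable := by
    rw [← map_mul, ← map_mul, ← mul_assoc]
    refine Separable.of_dvd ?_ (map_dvd red42 hdvd)
    rw [red42, coe_mapRingHom, Polynomial.map_sub, Polynomial.map_pow, map_X, Polynomial.map_one,
      X_pow_sub_one_separable_iff, Ne, ZMod.natCast_eq_zero_iff]
    exact hβ.not_two_dvd_nat
  exact ⟨isCoprime_of_isCoprime_red42 hsep.isCoprime.of_mul_right_left,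
    isCoprime_of_isCoprime_red42 hsep.isCoprime.of_mul_right_right,
    isCoprime_of_isCoprime_red42 hsep.of_mul_right.isCoprime⟩

theorem X_pow_sub_one_dvd_reverse_mul_add_two_mul_iff {β : ℕ} (hβ : Odd β)
    {f g h : (ZMod 4)[X]} (hf : f.Monic) (hg : g.Monic) (hh : h.Monic)
    (hfac : f * g * h = X ^ β - 1) (p : (ZMod 4)[X]) :
    (X ^ β - 1 : (ZMod 4)[X]) ∣ (f * h + 2 * f).reverse * p ↔
      ∃ μ, (X ^ β - 1 : (ZMod 4)[X]) ∣ p - μ * (g.reverse * h.reverse + 2 * g.reverse) := by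
  have : NeZero β := ⟨hβ.pos.ne'⟩
  have : Fact (1 < 4) := ⟨by norm_num⟩
  have hprod := reverse_mul_reverse_mul_reverse hf hg hh hfac
  obtain ⟨hFG, hFH, hGH⟩ := pairwise_isCoprime_of_mul_mul_dvd hβ (by rw [hprod, neg_dvd])
  have hABH : mk (X ^ β - 1) f.reverse * mk _ g.reverse * mk _ h.reverse = 0 := by
    rw [← map_mul, ← map_mul, hprod, mk_eq_zero, dvd_neg]
  have hU : IsUnit (root (X ^ β - 1 : (ZMod 4)[X]) ^ h.natDegree) :=
    (IsUnit.of_pow_eq_one root_X_pow_sub_one_pow (NeZero.ne β)).pow _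
  have key := mul_add_two_mul_mul_eq_zero_iff ofNat_four_eq_zero
    (fun r => two_dvd_of_two_mul_eq_zero (monic_X_pow_sub_one hβ.pos))
    (hFG.map (mk _)) (hFH.map (mk _)) (hGH.map (mk _)) hABH hU (mk _ p)
  rw [← mk_eq_zero, ← mk_dvd_mk_iff, map_mul, reverse_mul_add_two_mul hf hh]
  convert key using 2
  · simp only [map_mul, map_add, map_pow, mk_X, map_ofNat]
  · simp only [map_mul, map_add, map_ofNat]
    ring

theorem two_mul_sum_val_mul_val_eq_zero_iff {α : ℕ} (x y : Fin α → ZMod 2) :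
    2 * ∑ i, ((x i).val : ZMod 4) * ((y i).val : ZMod 4) = 0 ↔ ∑ i, x i * y i = 0 := by
  let φ : ZMod 2 →+ ZMod 4 := AddMonoidHom.mk' (fun a => 2 * (a.val : ZMod 4)) (by decide)
  have hφ : ∀ a b : ZMod 2, 2 * ((a.val : ZMod 4) * (b.val : ZMod 4)) = φ (a * b) := by decide
  have hφ0 : ∀ a : ZMod 2, φ a = 0 ↔ a = 0 := by decide
  rw [Finset.mul_sum, Finset.sum_congr rfl fun i _ => hφ (x i) (y i), ← map_sum, hφ0]

theorem memC_zero_iff {α β : ℕ} (b : (ZMod 2)[X]) (q : (ZMod 4)[X])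
    (z : (Fin α → ZMod 2) × (Fin β → ZMod 4)) :
    memC b 0 q z ↔ (∃ μ, (X ^ α - 1 : (ZMod 2)[X]) ∣ polyOf2 z.1 - μ * b) ∧
      ∃ μ, (X ^ β - 1 : (ZMod 4)[X]) ∣ polyOf4 z.2 - μ * q := by
  constructor
  · rintro ⟨lam, mu, h2, h4⟩
    exact ⟨⟨red42 lam, by simpa using h2⟩, mu, h4⟩
  · rintro ⟨⟨μ, h2⟩, mu, h4⟩
    obtain ⟨lam, rfl⟩ := red42_surjective μ
    exact ⟨lam, mu, by simpa using h2, h4⟩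

theorem forall_memC_zero_imp_innerZ2Z4_eq_zero_iff {α β : ℕ} (b : (ZMod 2)[X])
    (q : (ZMod 4)[X]) (v : (Fin α → ZMod 2) × (Fin β → ZMod 4)) :
    (∀ u, memC b 0 q u → innerZ2Z4 u v = 0) ↔
      (∀ x, (∃ μ, (X ^ α - 1 : (ZMod 2)[X]) ∣ polyOf2 x - μ * b) → ∑ i, x i * v.1 i = 0) ∧
      ∀ y, (∃ μ, (X ^ β - 1 : (ZMod 4)[X]) ∣ polyOf4 y - μ * q) → ∑ j, y j * v.2 j = 0 := by
  simp only [memC_zero_iff, innerZ2Z4]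
  constructor
  · intro h
    refine ⟨fun x hx => ?_, fun y hy => ?_⟩
    · rw [← two_mul_sum_val_mul_val_eq_zero_iff]
      simpa using h (x, 0) ⟨hx, 0, by simp [polyOf4]⟩
    · simpa using h (0, y) ⟨⟨0, by simp [polyOf2]⟩, hy⟩
  · rintro ⟨hX, hY⟩ u ⟨hx, hy⟩
    rw [(two_mul_sum_val_mul_val_eq_zero_iff _ _).mpr (hX _ hx), hY _ hy, add_zero]

theorem dual_of_separable_general (α β : ℕ) (hα : 0 < α) (hβ : Odd β)
    (f g h : Polynomial (ZMod 4)) (hf : f.Monic) (hg : g.Monic) (hh : h.Monic)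
    (hfac : f * g * h = X ^ β - 1)
    (b : Polynomial (ZMod 2)) (hb : b ∣ X ^ α - 1) :
    ∀ v : (Fin α → ZMod 2) × (Fin β → ZMod 4),
      (∀ u : (Fin α → ZMod 2) × (Fin β → ZMod 4),
        memC b 0 (f * h + 2 * f) u → innerZ2Z4 u v = 0) ↔
      memC ((X ^ α - 1) / b.reverse) 0
        (g.reverse * h.reverse + 2 * g.reverse) v := by
  intro v
  have : NeZero α := ⟨hα.ne'⟩
  have : NeZero β := ⟨hβ.pos.ne'⟩
  rw [forall_memC_zero_imp_innerZ2Z4_eq_zero_iff, memC_zero_iff]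
  exact and_congr
    ((forall_sum_mul_eq_zero_iff_dvd b v.1).trans (X_pow_sub_one_dvd_reverse_mul_iff hα hb _))
    ((forall_sum_mul_eq_zero_iff_dvd _ v.2).trans
      (X_pow_sub_one_dvd_reverse_mul_add_two_mul_iff hβ hf hg hh hfac _))

/-- If `C = ⟨(b|0), (0|fh+2f)⟩` is a separable `Z₂Z₄`-additive cyclic code
with `fgh = x^β-1`, `β` odd, then
`C⊥ = ⟨((x^α-1)/b* | 0), (0 | g*h* + 2g*)⟩`. -/
theorem dual_of_separable (α β : ℕ) (hα : 0 < α) (hβ : Odd β)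
    (f g h : Polynomial (ZMod 4)) (hf : f.Monic) (hg : g.Monic) (hh : h.Monic)
    (hfac : f * g * h = X ^ β - 1)
    (b : Polynomial (ZMod 2)) (hbm : b.Monic) (hb : b ∣ X ^ α - 1) :
    ∀ v : (Fin α → ZMod 2) × (Fin β → ZMod 4),
      (∀ u : (Fin α → ZMod 2) × (Fin β → ZMod 4),
        memC b 0 (f * h + 2 * f) u → innerZ2Z4 u v = 0) ↔
      memC ((X ^ α - 1) / b.reverse) 0
        (g.reverse * h.reverse + 2 * g.reverse) v :=
  dual_of_separable_general α β hα hβ f g h hf hg hh hfac b hb
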